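/- Let v₁, v₂ ∈ ℝ² be linearly independent with v₁ ∧ v₂ = A > 0, let n ≥ 2 be an integer, and let a > 0, b = a + (n − 1). Define c_a(t) = v₀ + t v₁ + (t(t+1)/2)v₂ for t ∈ [a, b]. Then the set of lattice points of L(v₀,v₁,v₂) on the image of c_a is exactly {c_a(a), c_a(a+1), …, c_a(a+n−1)}; in particular the curve contains exactly n lattice points. -/
import Mathlib


noncomputable def wedge (u v : EuclideanSpace ℝ (Fin 2)) : ℝ := u 0 * v 1 - u 1 * v 0

def lat (v₀ v₁ v₂ : EuclideanSpace ℝ (Fin 2)) : Set (EuclideanSpace ℝ (Fin 2)) :=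
  {P | ∃ m k : ℤ, P = v₀ + (m : ℝ) • v₁ + (k : ℝ) • v₂}

/-- the lattice points on the curve c_a(t) = v₀ + t v₁ + (t(t+1)/2)v₂,
t ∈ [a, a+(n−1)] (a a positive integer), are exactly c_a(a), …, c_a(a+n−1);
in particular there are exactly n of them. -/
theorem stmt_17 (v₀ v₁ v₂ : EuclideanSpace ℝ (Fin 2))
    (hli : LinearIndependent ℝ ![v₁, v₂]) (A : ℝ) (hA : wedge v₁ v₂ = A) (hApos : 0 < A)
    (n : ℕ) (hn : 2 ≤ n) (a : ℤ) (ha : 0 < a)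
    (c : ℝ → EuclideanSpace ℝ (Fin 2))
    (hc : ∀ t : ℝ, c t = v₀ + t • v₁ + (t * (t + 1) / 2) • v₂) :
    (c '' Set.Icc (a : ℝ) ((a : ℝ) + (n - 1)) ∩ lat v₀ v₁ v₂ =
        (fun j : ℕ => c ((a : ℝ) + j)) '' Set.Iio n) ∧
      (c '' Set.Icc (a : ℝ) ((a : ℝ) + (n - 1)) ∩ lat v₀ v₁ v₂).ncard = n := by
  have key : ∀ x y : ℝ, x • v₁ + y • v₂ = 0 → x = 0 ∧ y = 0 := by
    intro x y h
    exact (LinearIndependent.pair_iff.mp hli) x y h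
  -- c is injective
  have hcinj : Function.Injective c := by
    intro t t' h
    rw [hc, hc] at h
    have h0 : (t - t') • v₁ + (t * (t + 1) / 2 - t' * (t' + 1) / 2) • v₂ = 0 := by
      have := sub_eq_zero.mpr h
      rw [sub_smul, sub_smul] at *
      abel_nf at this ⊢
      linear_combination (norm := abel) this
    have := (key _ _ h0).1
    linarith [sub_eq_zero.mp this]
  have hset : c '' Set.Icc (a : ℝ) ((a : ℝ) + (n - 1)) ∩ lat v₀ v₁ v₂ =
      (fun j : ℕ => c ((a : ℝ) + j)) '' Set.Iio n := by
    ext x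
    constructor
    · rintro ⟨⟨t, ht, rfl⟩, m, k, hmk⟩
      rw [hc] at hmk
      have h0 : (t - (m : ℝ)) • v₁ + (t * (t + 1) / 2 - (k : ℝ)) • v₂ = 0 := by
        rw [sub_smul, sub_smul]
        have := sub_eq_zero.mpr hmk
        abel_nf at this ⊢
        linear_combination (norm := abel) this
      have htm : t = (m : ℝ) := by linarith [sub_eq_zero.mp (key _ _ h0).1]
      obtain ⟨ht1, ht2⟩ := ht
      have ham : a ≤ m := by exact_mod_cast htm ▸ ht1
      have hmb : m ≤ a + (n - 1 : ℕ) := by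
        have : (m : ℝ) ≤ (a : ℝ) + ((n : ℝ) - 1) := htm ▸ ht2
        have h1 : ((n : ℤ) - 1 : ℤ) = ((n - 1 : ℕ) : ℤ) := by
          have : 1 ≤ n := by omega
          push_cast [this]; ring
        have : (m : ℝ) ≤ ((a + ((n : ℤ) - 1) : ℤ) : ℝ) := by push_cast; linarith
        exact_mod_cast h1 ▸ (by exact_mod_cast this : m ≤ a + ((n : ℤ) - 1))
      refine ⟨(m - a).toNat, ?_, ?_⟩
      · simp only [Set.mem_Iio]
        omega
      · simp only
        have hnn : ((m - a).toNat : ℤ) = m - a := Int.toNat_of_nonneg (by omega)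
        have harg : (a : ℝ) + ((m - a).toNat : ℝ) = (m : ℝ) := by
          have : ((a + ((m - a).toNat : ℤ) : ℤ) : ℝ) = ((m : ℤ) : ℝ) := by
            exact_mod_cast congrArg (Int.cast : ℤ → ℝ) (by omega : a + ((m - a).toNat : ℤ) = m)
          push_cast at this
          linarith
        rw [harg, htm]
    · rintro ⟨j, hj, rfl⟩
      simp only [Set.mem_Iio] at hj
      have hjn : (j : ℝ) ≤ (n : ℝ) - 1 := by
        have : (j : ℝ) + 1 ≤ (n : ℝ) := by exact_mod_cast hj
        linarith
      refine ⟨⟨(a : ℝ) + j, ⟨by linarith [Nat.cast_nonneg (α := ℝ) j], by linarith⟩, rfl⟩, ?_⟩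
      set m : ℤ := a + j with hm
      obtain ⟨r, hr⟩ := Int.even_mul_succ_self m
      refine ⟨m, r, ?_⟩
      simp only
      rw [hc]
      have h1 : ((a : ℝ) + j) = (m : ℝ) := by push_cast [hm]; ring
      have h2 : (m : ℝ) * ((m : ℝ) + 1) / 2 = (r : ℝ) := by
        have : (m : ℝ) * ((m : ℝ) + 1) = (r : ℝ) + r := by exact_mod_cast congrArg (Int.cast : ℤ → ℝ) hr
        linarith
      rw [h1, h2]
  refine ⟨hset, ?_⟩
  rw [hset]
  have hinj2 : Set.InjOn (fun j : ℕ => c ((a : ℝ) + j)) (Set.Iio n) := by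
    intro j _ j' _ h
    have := hcinj h
    have : (j : ℝ) = j' := by linarith [add_left_cancel this]
    exact_mod_cast this
  rw [Set.ncard_image_of_injOn hinj2]
  rw [show (Set.Iio n : Set ℕ) = ↑(Finset.Iio n) by simp]
  rw [Set.ncard_coe_finset, Nat.card_Iio]
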